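/- arXiv:1207.7298 — 5 statements merged into one kernel-verified Lean document; each statement's English description precedes it below -/
import Mathlib

section
/- For fixed 0 < γ < 1, the function β ↦ β / Λ(β) is strictly monotone increasing on (0, γ), where Λ(β) = β log(β/γ) + (1−β) log((1−β)/(1−γ)). Consequently, for every c > 0 the equation c = β/Λ(β) has a unique solution β_c ∈ (0, γ). -/
/-!
Writing `Λ(β) = bernoulliRate γ β` as `γ·klFun(β/γ) + (1-γ)·klFun((1-β)/(1-γ))`, where
`klFun x = x log x + 1 - x ≥ 0` vanishes only at `1`, shows that `Λ` is continuous and positive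
away from `γ`. Since `Λ'(β) = log(β/γ) - log((1-β)/(1-γ))`, the derivative of `Λ(β)/β` is
`-log((1-β)/(1-γ))/β² < 0` on `(0, γ)`, so `β/Λ(β)` is strictly increasing there. For `c > 0`,
the continuous function `c·Λ(β) - β` is positive at `0` and equals `-γ` at `γ`, so it vanishes
somewhere in `(0, γ)`.
-/

open Real InformationTheory Set

noncomputable def bernoulliRate (γ β : ℝ) : ℝ :=
  β * log (β / γ) + (1 - β) * log ((1 - β) / (1 - γ))

section BernoulliRate

variable {γ β : ℝ}

lemma bernoulliRate_eq_klFun (hγ0 : γ ≠ 0) (hγ1 : γ ≠ 1) (β : ℝ) :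
    bernoulliRate γ β = γ * klFun (β / γ) + (1 - γ) * klFun ((1 - β) / (1 - γ)) := by
  have h1γ : 1 - γ ≠ 0 := sub_ne_zero.mpr hγ1.symm
  simp only [bernoulliRate, klFun_apply]
  field_simp
  ring

lemma continuous_bernoulliRate (hγ0 : γ ≠ 0) (hγ1 : γ ≠ 1) : Continuous (bernoulliRate γ) := by
  rw [funext (bernoulliRate_eq_klFun hγ0 hγ1)]
  fun_prop

lemma bernoulliRate_pos (hγ0 : 0 < γ) (hγ1 : γ < 1) (hβ0 : 0 ≤ β) (hβ1 : β ≤ 1) (hβγ : β ≠ γ) :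
    0 < bernoulliRate γ β := by
  have h1γ : 0 < 1 - γ := sub_pos.mpr hγ1
  have hkl_pos : 0 < klFun (β / γ) :=
    (klFun_nonneg (by positivity)).lt_of_ne' fun h =>
      hβγ ((div_eq_one_iff_eq hγ0.ne').mp ((klFun_eq_zero_iff (by positivity)).mp h))
  have hkl_nonneg : 0 ≤ klFun ((1 - β) / (1 - γ)) :=
    klFun_nonneg (div_nonneg (sub_nonneg.mpr hβ1) h1γ.le)
  rw [bernoulliRate_eq_klFun hγ0.ne' hγ1.ne]
  positivity

lemma hasDerivAt_bernoulliRate (hγ0 : γ ≠ 0) (hγ1 : γ ≠ 1) (hβ0 : β ≠ 0) (hβ1 : β ≠ 1) :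
    HasDerivAt (bernoulliRate γ) (log (β / γ) - log ((1 - β) / (1 - γ))) β := by
  have h1γ : 1 - γ ≠ 0 := sub_ne_zero.mpr hγ1.symm
  have h1β : 1 - β ≠ 0 := sub_ne_zero.mpr hβ1.symm
  have hfirst := (hasDerivAt_klFun (div_ne_zero hβ0 hγ0)).comp β ((hasDerivAt_id' β).div_const γ)
  have hsecond := (hasDerivAt_klFun (div_ne_zero h1β h1γ)).comp β
    (((hasDerivAt_id' β).const_sub 1).div_const (1 - γ))
  rw [funext (bernoulliRate_eq_klFun hγ0 hγ1)]
  refine ((hfirst.const_mul γ).add (hsecond.const_mul (1 - γ))).congr_deriv ?_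
  field_simp
  ring

lemma strictAntiOn_bernoulliRate_div_self (hγ0 : 0 < γ) (hγ1 : γ < 1) :
    StrictAntiOn (fun β => bernoulliRate γ β / β) (Ioo 0 γ) := by
  apply strictAntiOn_of_deriv_neg (convex_Ioo 0 γ)
  · exact (continuous_bernoulliRate hγ0.ne' hγ1.ne).continuousOn.div continuousOn_id
      fun x hx => hx.1.ne'
  · rw [interior_Ioo]
    rintro x ⟨hx0, hxγ⟩
    have hΛ := hasDerivAt_bernoulliRate hγ0.ne' hγ1.ne hx0.ne' (hxγ.trans hγ1).ne
    have hquot : HasDerivAt (fun β => bernoulliRate γ β / β) _ x := hΛ.div (hasDerivAt_id' x) hx0.ne'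
    rw [hquot.deriv]
    have hnum : (log (x / γ) - log ((1 - x) / (1 - γ))) * x - bernoulliRate γ x * 1
        = -log ((1 - x) / (1 - γ)) := by
      simp only [bernoulliRate]
      ring
    have hlog : 0 < log ((1 - x) / (1 - γ)) :=
      log_pos ((one_lt_div (sub_pos.mpr hγ1)).mpr (by linarith))
    rw [hnum]
    exact div_neg_of_neg_of_pos (neg_neg_of_pos hlog) (by positivity)

lemma strictMonoOn_div_bernoulliRate (hγ0 : 0 < γ) (hγ1 : γ < 1) :
    StrictMonoOn (fun β => β / bernoulliRate γ β) (Ioo 0 γ) := by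
  intro a ha b hb hab
  have hanti := strictAntiOn_bernoulliRate_div_self hγ0 hγ1 ha hb hab
  have hpos : 0 < bernoulliRate γ b / b :=
    div_pos (bernoulliRate_pos hγ0 hγ1 hb.1.le (hb.2.trans hγ1).le hb.2.ne) hb.1
  simpa only [inv_div] using (inv_lt_inv₀ (hpos.trans hanti) hpos).mpr hanti

lemma exists_mem_Ioo_eq_div_bernoulliRate (hγ0 : 0 < γ) (hγ1 : γ < 1) {c : ℝ} (hc : 0 < c) :
    ∃ β ∈ Ioo 0 γ, c = β / bernoulliRate γ β := by
  have hΛ0 : 0 < bernoulliRate γ 0 := bernoulliRate_pos hγ0 hγ1 le_rfl zero_le_one hγ0.ne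
  have hcont : ContinuousOn (fun β => c * bernoulliRate γ β - β) (Icc 0 γ) :=
    ((continuous_bernoulliRate hγ0.ne' hγ1.ne).const_mul c |>.sub continuous_id).continuousOn
  have hzero : (0 : ℝ) ∈ Ioo (c * bernoulliRate γ γ - γ) (c * bernoulliRate γ 0 - 0) := by
    have hΛγ : bernoulliRate γ γ = 0 := by
      simp [bernoulliRate, div_self hγ0.ne', div_self (sub_pos.mpr hγ1).ne']
    rw [hΛγ, mul_zero, zero_sub, sub_zero]
    exact ⟨neg_neg_of_pos hγ0, mul_pos hc hΛ0⟩
  obtain ⟨β, hβ, hroot⟩ := intermediate_value_Ioo' hγ0.le hcont hzero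
  have hΛβ : bernoulliRate γ β ≠ 0 :=
    (bernoulliRate_pos hγ0 hγ1 hβ.1.le (hβ.2.trans hγ1).le hβ.2.ne).ne'
  refine ⟨β, hβ, ?_⟩
  rw [eq_div_iff hΛβ]
  linarith [show c * bernoulliRate γ β - β = 0 from hroot]

end BernoulliRate

theorem stmt_8 (γ : ℝ) (hγ0 : 0 < γ) (hγ1 : γ < 1) :
    StrictMonoOn
      (fun β : ℝ => β / (β * Real.log (β / γ) + (1 - β) * Real.log ((1 - β) / (1 - γ))))
      (Set.Ioo 0 γ) ∧
    ∀ c : ℝ, 0 < c → ∃! β : ℝ, β ∈ Set.Ioo 0 γ ∧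
      c = β / (β * Real.log (β / γ) + (1 - β) * Real.log ((1 - β) / (1 - γ))) := by
  have hmono := strictMonoOn_div_bernoulliRate hγ0 hγ1
  refine ⟨hmono, fun c hc => ?_⟩
  obtain ⟨β, hβ, hβc⟩ := exists_mem_Ioo_eq_div_bernoulliRate hγ0 hγ1 hc
  exact ⟨β, ⟨hβ, hβc⟩, fun β' ⟨hβ', hβ'c⟩ => hmono.injOn hβ' hβ (hβ'c.symm.trans hβc)⟩
end

section
/- Consider a two-state Gilbert–Elliott Markov chain with transition probabilities p₁₀ (from state 1 to 0) and p₀₁ (from 0 to 1), both in (0,1). Let T^(1) be the first hitting time of state 1 starting from state 1, and T^(0) the first hitting time of state 1 starting from state 0. Let T^(1)_1, …, T^(1)_{K₀+1} be i.i.d. copies of T^(1), where K₀ = min{ m ≥ 0 : Σ_{d=0}^m (1−p₁₀)^d p₁₀ + p₀₁ ≥ 1 }. Then Σ_{d=1}^{K₀+1} T^(1)_d stochastically dominates T^(0): for all t, P(Σ_{d=1}^{K₀+1} T^(1)_d > t) ≥ P(T^(0) > t). -/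
/-!
The sum dominates the maximum, and by independence `P(max_d T⁽¹⁾_d ≤ t) = F(t)^(K₀+1)` for the
distribution function `F` of `T⁽¹⁾`, with `F(t+1) = 1 - p₁₀ x` where `x = (1-p₀₁)^t`. Since
`F(t+1) = (1-x)·1 + x·(1-p₁₀)` is a convex combination, convexity of `u ↦ u^n` gives
`F(t+1)^(K₀+1) ≤ 1 - x + x(1-p₁₀)^(K₀+1) ≤ 1 - x(1-p₀₁)`, the last step being the defining
property `(1-p₁₀)^(K₀+1) ≤ p₀₁` of `K₀`. Hence `P(max > t+1) ≥ (1-p₀₁)^(t+1) = P(T⁽⁰⁾ > t+1)`.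
-/

open MeasureTheory ProbabilityTheory

lemma one_sub_add_mul_pow_le {a x : ℝ} (ha : 0 ≤ a) (hx₀ : 0 ≤ x) (hx₁ : x ≤ 1) (n : ℕ) :
    (1 - x + x * a) ^ n ≤ 1 - x + x * a ^ n := by
  simpa using (convexOn_pow n).2 (Set.mem_Ici.2 zero_le_one) (Set.mem_Ici.2 ha)
    (sub_nonneg.2 hx₁) hx₀ (sub_add_cancel 1 x)

lemma pow_sInf_succ_le {p q : ℝ} (hp₀ : 0 < p) (hp₁ : p ≤ 1) (hq : 0 < q) :
    (1 - p) ^ (sInf {m : ℕ | (∑ d ∈ Finset.range (m + 1), (1 - p) ^ d * p) + q ≥ 1} + 1) ≤ q := by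
  have hset : {m : ℕ | (∑ d ∈ Finset.range (m + 1), (1 - p) ^ d * p) + q ≥ 1} =
      {m : ℕ | (1 - p) ^ (m + 1) ≤ q} := by
    ext m
    have hgeom := geom_sum_mul_neg (1 - p) (m + 1)
    rw [sub_sub_cancel] at hgeom
    simp only [Set.mem_ofPred_eq, ← Finset.sum_mul, hgeom]
    constructor <;> intro h <;> linarith
  rw [hset]
  obtain ⟨m, hm⟩ := exists_pow_lt_of_lt_one hq (by linarith : 1 - p < 1)
  exact Nat.sInf_mem (s := {m : ℕ | (1 - p) ^ (m + 1) ≤ q})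
    ⟨m, (pow_le_pow_of_le_one (by linarith) (by linarith) m.le_succ).trans hm.le⟩

def returnTimeCDF (p q : ℝ) : ℕ → ℝ
  | 0 => 0
  | r + 1 => 1 - p * (1 - q) ^ r

lemma returnTimeCDF_nonneg {p q : ℝ} (hp : p ≤ 1) (hq₀ : 0 ≤ q) (hq₁ : q ≤ 1) (t : ℕ) :
    0 ≤ returnTimeCDF p q t := by
  cases t with
  | zero => exact le_rfl
  | succ r =>
    have := pow_le_one₀ (sub_nonneg.2 hq₁) (sub_le_self 1 hq₀) (n := r)
    have := pow_nonneg (sub_nonneg.2 hq₁) r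
    simp only [returnTimeCDF]
    nlinarith

lemma ofReal_pow_le_one_sub_returnTimeCDF_pow {p q : ℝ} (hp : p ≤ 1) (hq₀ : 0 ≤ q) (hq₁ : q ≤ 1)
    {n : ℕ} (hn : n ≠ 0) (hpq : (1 - p) ^ n ≤ q) (t : ℕ) :
    ENNReal.ofReal ((1 - q) ^ t) ≤ 1 - ENNReal.ofReal (returnTimeCDF p q t) ^ n := by
  have hF := returnTimeCDF_nonneg hp hq₀ hq₁ t
  rw [← ENNReal.ofReal_pow hF, ← ENNReal.ofReal_one, ← ENNReal.ofReal_sub _ (pow_nonneg hF n)]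
  refine ENNReal.ofReal_le_ofReal ?_
  cases t with
  | zero => simp [returnTimeCDF, hn]
  | succ r =>
    set x := (1 - q) ^ r
    have hx₀ : 0 ≤ x := pow_nonneg (sub_nonneg.2 hq₁) r
    have hx₁ : x ≤ 1 := pow_le_one₀ (sub_nonneg.2 hq₁) (sub_le_self 1 hq₀)
    have hconv := one_sub_add_mul_pow_le (sub_nonneg.2 hp) hx₀ hx₁ n
    have hF_eq : returnTimeCDF p q (r + 1) = 1 - x + x * (1 - p) := by
      simp only [returnTimeCDF, x]
      ring
    rw [hF_eq, pow_succ]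
    nlinarith [mul_le_mul_of_nonneg_left hpq hx₀]

lemma one_sub_prod_measure_le_measure_lt_sum {Ω ι : Type*} [MeasurableSpace Ω] [Fintype ι]
    {μ : Measure Ω} [IsProbabilityMeasure μ] {X : ι → Ω → ℕ} (hX : iIndepFun X μ) (t : ℕ) :
    1 - ∏ i, μ {ω | X i ω ≤ t} ≤ μ {ω | t < ∑ i, X i ω} := by
  rw [← hX.meas_iInter (s := fun i => {ω | X i ω ≤ t}) fun i => ⟨Set.Iic t, measurableSet_Iic, rfl⟩,
    tsub_le_iff_left, ← measure_univ (μ := μ)]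
  refine (measure_univ_le_add_compl _).trans (add_le_add_right (measure_mono ?_) _)
  intro ω hω
  obtain ⟨i, hi⟩ : ∃ i, t < X i ω := by simpa using hω
  exact hi.trans_le (Finset.single_le_sum (fun j _ => Nat.zero_le (X j ω)) (Finset.mem_univ i))

section ReturnTime

variable {Ω : Type*} [MeasurableSpace Ω] {μ : Measure Ω} {X : Ω → ℕ}

lemma measure_le_succ_eq_add (hX : Measurable X) (n : ℕ) :
    μ {ω | X ω ≤ n + 1} = μ {ω | X ω ≤ n} + μ {ω | X ω = n + 1} := by
  rw [← measure_union (s₂ := {ω | X ω = n + 1}) (Set.disjoint_left.2 fun ω h h' => by simp_all)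
    (hX (measurableSet_singleton (n + 1)))]
  congr 1
  ext ω
  simp only [Set.mem_ofPred_eq, Set.mem_union]
  omega

lemma tsum_measure_fiber_eq_one [IsProbabilityMeasure μ] (hX : Measurable X) :
    ∑' n, μ {ω | X ω = n} = 1 := by
  rw [← measure_iUnion (f := fun n => {ω | X ω = n})
    (fun i j hij => Set.disjoint_left.2 fun ω h h' => hij (h.symm.trans h'))
    fun n => hX (measurableSet_singleton n)]
  convert measure_univ (μ := μ)
  ext ω
  simp

/-- The law of `T⁽¹⁾`, with `p = p₁₀` and `q = p₀₁`. The mass at `0` is not prescribed: the total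
mass forces it to vanish. -/
structure HasReturnTimeLaw (μ : Measure Ω) (p q : ℝ) (X : Ω → ℕ) : Prop where
  measure_eq_one : μ {ω | X ω = 1} = ENNReal.ofReal (1 - p)
  measure_eq_of_two_le : ∀ t : ℕ, 2 ≤ t →
    μ {ω | X ω = t} = ENNReal.ofReal (p * (1 - q) ^ (t - 2) * q)

variable {p q : ℝ}

lemma measure_eq_zero_of_hasReturnTimeLaw [IsProbabilityMeasure μ] (hX : Measurable X)
    (hlaw : HasReturnTimeLaw μ p q X) (hp₀ : 0 ≤ p) (hp₁ : p ≤ 1) (hq₀ : 0 < q) (hq₁ : q ≤ 1) :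
    μ {ω | X ω = 0} = 0 := by
  have hgeom : HasSum (fun s : ℕ => p * (1 - q) ^ s * q) p := by
    have := ((hasSum_geometric_of_lt_one (sub_nonneg.2 hq₁) (sub_lt_self 1 hq₀)).mul_left p).mul_right q
    rwa [sub_sub_cancel, mul_assoc, inv_mul_cancel₀ hq₀.ne', mul_one] at this
  have htail : ∑' s : ℕ, μ {ω | X ω = s + 2} = ENNReal.ofReal p := by
    rw [← hgeom.tsum_eq, ENNReal.ofReal_tsum_of_nonneg (fun s => by positivity) hgeom.summable]
    exact tsum_congr fun s => by simpa using hlaw.measure_eq_of_two_le (s + 2) le_add_self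
  have htotal := tsum_measure_fiber_eq_one (μ := μ) hX
  rw [tsum_eq_zero_add' ENNReal.summable, tsum_eq_zero_add' ENNReal.summable, zero_add,
    hlaw.measure_eq_one, htail, ← ENNReal.ofReal_add (sub_nonneg.2 hp₁) hp₀, sub_add_cancel,
    ENNReal.ofReal_one] at htotal
  simpa using htotal

lemma measure_le_eq_returnTimeCDF [IsProbabilityMeasure μ] (hX : Measurable X)
    (hlaw : HasReturnTimeLaw μ p q X) (hp₀ : 0 ≤ p) (hp₁ : p ≤ 1) (hq₀ : 0 < q) (hq₁ : q ≤ 1) :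
    ∀ t, μ {ω | X ω ≤ t} = ENNReal.ofReal (returnTimeCDF p q t)
  | 0 => by
    simpa [returnTimeCDF] using measure_eq_zero_of_hasReturnTimeLaw hX hlaw hp₀ hp₁ hq₀ hq₁
  | 1 => by
    rw [measure_le_succ_eq_add hX, measure_le_eq_returnTimeCDF hX hlaw hp₀ hp₁ hq₀ hq₁ 0, zero_add,
      hlaw.measure_eq_one]
    simp [returnTimeCDF]
  | r + 2 => by
    rw [measure_le_succ_eq_add hX, measure_le_eq_returnTimeCDF hX hlaw hp₀ hp₁ hq₀ hq₁ (r + 1),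
      hlaw.measure_eq_of_two_le _ le_add_self,
      ← ENNReal.ofReal_add (returnTimeCDF_nonneg hp₁ hq₀.le hq₁ _) (by positivity)]
    simp only [returnTimeCDF, Nat.add_sub_cancel]
    ring_nf

end ReturnTime

theorem stmt_10_general {Ω : Type*} [MeasureSpace Ω] [IsProbabilityMeasure (volume : Measure Ω)]
    (p10 p01 : ℝ) (hp10 : p10 ∈ Set.Ioo (0:ℝ) 1) (hp01 : p01 ∈ Set.Ioo (0:ℝ) 1)
    (K0 : ℕ)
    (hK0 : K0 = sInf {m : ℕ | (∑ d ∈ Finset.range (m + 1), (1 - p10) ^ d * p10) + p01 ≥ 1})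
    (T1 : Fin (K0 + 1) → Ω → ℕ) (T0 : Ω → ℕ)
    (hmeas1 : ∀ d, Measurable (T1 d))
    (hindep : iIndepFun T1 volume)
    (hdist1 : ∀ d, volume {ω | T1 d ω = 1} = ENNReal.ofReal (1 - p10))
    (hdist2 : ∀ d, ∀ t : ℕ, 2 ≤ t →
      volume {ω | T1 d ω = t} = ENNReal.ofReal (p10 * (1 - p01) ^ (t - 2) * p01))
    (hdist0 : ∀ t : ℕ, volume {ω | t < T0 ω} = ENNReal.ofReal ((1 - p01) ^ t)) :
    ∀ t : ℕ, volume {ω | t < ∑ d, T1 d ω} ≥ volume {ω | t < T0 ω} := by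
  obtain ⟨hp10₀, hp10₁⟩ := hp10
  obtain ⟨hp01₀, hp01₁⟩ := hp01
  have hpow : (1 - p10) ^ (K0 + 1) ≤ p01 := by
    rw [hK0]
    exact pow_sInf_succ_le hp10₀ hp10₁.le hp01₀
  have hcdf (d : Fin (K0 + 1)) (t : ℕ) :
      volume {ω | T1 d ω ≤ t} = ENNReal.ofReal (returnTimeCDF p10 p01 t) :=
    measure_le_eq_returnTimeCDF (hmeas1 d) ⟨hdist1 d, hdist2 d⟩ hp10₀.le hp10₁.le hp01₀ hp01₁.le t
  intro t
  calc volume {ω | t < T0 ω} = ENNReal.ofReal ((1 - p01) ^ t) := hdist0 t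
    _ ≤ 1 - ENNReal.ofReal (returnTimeCDF p10 p01 t) ^ (K0 + 1) :=
      ofReal_pow_le_one_sub_returnTimeCDF_pow hp10₁.le hp01₀.le hp01₁.le K0.succ_ne_zero hpow t
    _ = 1 - ∏ d, volume {ω | T1 d ω ≤ t} := by simp [hcdf]
    _ ≤ volume {ω | t < ∑ d, T1 d ω} := one_sub_prod_measure_le_measure_lt_sum hindep t

theorem stmt_10 {Ω : Type*} [MeasureSpace Ω] [IsProbabilityMeasure (volume : Measure Ω)]
    (p10 p01 : ℝ) (hp10 : p10 ∈ Set.Ioo (0:ℝ) 1) (hp01 : p01 ∈ Set.Ioo (0:ℝ) 1)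
    (K0 : ℕ)
    (hK0 : K0 = sInf {m : ℕ | (∑ d ∈ Finset.range (m + 1), (1 - p10) ^ d * p10) + p01 ≥ 1})
    (T1 : Fin (K0 + 1) → Ω → ℕ) (T0 : Ω → ℕ)
    (hmeas1 : ∀ d, Measurable (T1 d)) (hmeas0 : Measurable T0)
    (hindep : iIndepFun T1 volume)
    (hdist1 : ∀ d, volume {ω | T1 d ω = 1} = ENNReal.ofReal (1 - p10))
    (hdist2 : ∀ d, ∀ t : ℕ, 2 ≤ t →
      volume {ω | T1 d ω = t} = ENNReal.ofReal (p10 * (1 - p01) ^ (t - 2) * p01))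
    (hdist0 : ∀ t : ℕ, volume {ω | t < T0 ω} = ENNReal.ofReal ((1 - p01) ^ t)) :
    ∀ t : ℕ, volume {ω | t < ∑ d, T1 d ω} ≥ volume {ω | t < T0 ω} :=
  stmt_10_general p10 p01 hp10 hp01 K0 hK0 T1 T0 hmeas1 hindep hdist1 hdist2 hdist0
end

section
/- For a geometric random variable T^(0) with P(T^(0) > t) = (1−p₀₁)^t for integers t ≥ 0, and i.i.d. random variables T^(1)_d with P(T^(1)_d = 1) = 1−p₁₀, P(T^(1)_d > 1) = p₁₀, where for each d the residual after the first step dominates a geometric with parameter p₀₁: if Σ_{d=1}^{m+1} p₁₀(1−p₁₀)^{d−1} + p₀₁ ≥ 1 then for all integers t > m+1, P(Σ_{d=1}^{m+1} T^(1)_d > t) ≥ (1−p₀₁)^t. -/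
/-!
The sum exceeds `t` as soon as one summand does. Each `T^(1)_d` exceeds `t` with probability
`q = p₁₀ (1 - p₀₁)^(t-1)`, so by independence some summand does with probability
`1 - (1 - q)^(m+1) = q ∑_{d ≤ m} (1 - q)^d ≥ q ∑_{d ≤ m} (1 - p₁₀)^d`, which the hypothesis
`∑_{d ≤ m} p₁₀ (1 - p₁₀)^d ≥ 1 - p₀₁` bounds below by `(1 - p₀₁)^t`.
-/

open MeasureTheory ProbabilityTheory Finset

lemma measure_preimage_Ioi_of_shifted_geometric {Ω : Type*} [MeasurableSpace Ω]
    {μ : Measure Ω} {X : Ω → ℕ} (hX : Measurable X) {a p : ℝ} (ha : 0 ≤ a) (hp : 0 < p)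
    (hp1 : p ≤ 1)
    (hpmf : ∀ n : ℕ, 2 ≤ n → μ {ω | X ω = n} = ENNReal.ofReal (a * (1 - p) ^ (n - 2) * p))
    {u : ℕ} (hu : 1 ≤ u) :
    μ (X ⁻¹' Set.Ioi u) = ENNReal.ofReal (a * (1 - p) ^ (u - 1)) := by
  have hr0 : 0 ≤ 1 - p := by linarith
  have hr1 : 1 - p < 1 := by linarith
  have hunion : X ⁻¹' Set.Ioi u = ⋃ k : ℕ, {ω | X ω = u + 1 + k} := by
    ext ω
    simp only [Set.mem_preimage, Set.mem_Ioi, Set.mem_ofPred_eq, Set.mem_iUnion]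
    exact ⟨fun h => ⟨X ω - (u + 1), by omega⟩, fun ⟨k, hk⟩ => by omega⟩
  have hterm (k : ℕ) : μ {ω | X ω = u + 1 + k}
      = ENNReal.ofReal (a * (1 - p) ^ (u - 1) * p * (1 - p) ^ k) := by
    rw [hpmf _ (by omega), show u + 1 + k - 2 = (u - 1) + k by omega, pow_add]
    ring_nf
  have hdisj : Pairwise (Function.onFun Disjoint fun k : ℕ => {ω | X ω = u + 1 + k}) :=
    fun i j hij => Set.disjoint_left.2 fun ω hi hj => hij (by
      simp only [Set.mem_ofPred_eq] at hi hj; omega)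
  rw [hunion, measure_iUnion hdisj fun k => measurableSet_eq_fun hX measurable_const,
    funext hterm, ← ENNReal.ofReal_tsum_of_nonneg (fun k => by positivity)
      ((summable_geometric_of_lt_one hr0 hr1).mul_left _),
    tsum_mul_left, tsum_geometric_of_lt_one hr0 hr1, sub_sub_cancel, mul_assoc,
    mul_inv_cancel₀ hp.ne', mul_one]

lemma ProbabilityTheory.iIndepFun.measureReal_iUnion_preimage {Ω ι : Type*}
    [MeasurableSpace Ω] {μ : Measure Ω} [IsProbabilityMeasure μ] [Fintype ι] {β : ι → Type*}
    [∀ i, MeasurableSpace (β i)] {f : ∀ i, Ω → β i} (hf : iIndepFun f μ)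
    (hmeas : ∀ i, Measurable (f i)) {A : ∀ i, Set (β i)} (hA : ∀ i, MeasurableSet (A i)) :
    μ.real (⋃ i, f i ⁻¹' A i) = 1 - ∏ i, (1 - μ.real (f i ⁻¹' A i)) := by
  have hprod : μ.real (⋂ i, f i ⁻¹' (A i)ᶜ) = ∏ i, μ.real (f i ⁻¹' (A i)ᶜ) := by
    simp only [measureReal_def, hf.meas_iInter fun i => ⟨(A i)ᶜ, (hA i).compl, rfl⟩,
      ENNReal.toReal_prod]
  have hcompl : (⋃ i, f i ⁻¹' A i)ᶜ = ⋂ i, f i ⁻¹' (A i)ᶜ := by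
    simp only [Set.compl_iUnion, Set.preimage_compl]
  rw [← compl_compl (⋃ i, f i ⁻¹' A i), hcompl,
    probReal_compl_eq_one_sub (MeasurableSet.iInter fun i => hmeas i (hA i).compl), hprod]
  simp only [Set.preimage_compl, probReal_compl_eq_one_sub (hmeas _ (hA _))]

lemma pow_le_one_sub_one_sub_mul_pow {a r : ℝ} (ha0 : 0 ≤ a) (ha1 : a ≤ 1) (hr0 : 0 ≤ r)
    (hr1 : r ≤ 1) {n t : ℕ} (ht : 1 ≤ t) (hsum : r ≤ ∑ d ∈ range n, a * (1 - a) ^ d) :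
    r ^ t ≤ 1 - (1 - a * r ^ (t - 1)) ^ n := by
  set q := a * r ^ (t - 1)
  have hq : q ≤ a := mul_le_of_le_one_right ha0 (pow_le_one₀ hr0 hr1)
  calc r ^ t = r ^ (t - 1) * r := by rw [← pow_succ, Nat.sub_add_cancel ht]
    _ ≤ r ^ (t - 1) * ∑ d ∈ range n, a * (1 - a) ^ d := by gcongr
    _ = q * ∑ d ∈ range n, (1 - a) ^ d := by
        rw [mul_sum, mul_sum]
        exact sum_congr rfl fun d _ => by ring
    _ ≤ q * ∑ d ∈ range n, (1 - q) ^ d := by gcongr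
    _ = 1 - (1 - q) ^ n := by rw [← mul_neg_geom_sum, sub_sub_cancel]

theorem stmt_11_general {Ω : Type*} [MeasureSpace Ω] [IsProbabilityMeasure (volume : Measure Ω)]
    (p10 p01 : ℝ) (hp10 : p10 ∈ Set.Ioo (0:ℝ) 1) (hp01 : p01 ∈ Set.Ioo (0:ℝ) 1)
    (m : ℕ) (T1 : Fin (m + 1) → Ω → ℕ)
    (hmeas1 : ∀ d, Measurable (T1 d))
    (hindep : iIndepFun T1 volume)
    (hdist2 : ∀ d, ∀ t : ℕ, 2 ≤ t →
      volume {ω | T1 d ω = t} = ENNReal.ofReal (p10 * (1 - p01) ^ (t - 2) * p01))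
    (hsum : (∑ d ∈ Finset.range (m + 1), p10 * (1 - p10) ^ d) + p01 ≥ 1) :
    ∀ t : ℕ, m + 1 < t →
      volume {ω | t < ∑ d, T1 d ω} ≥ ENNReal.ofReal ((1 - p01) ^ t) := by
  obtain ⟨hp10_pos, hp10_lt⟩ := hp10
  obtain ⟨hp01_pos, hp01_lt⟩ := hp01
  have hr0 : 0 ≤ 1 - p01 := by linarith
  intro t ht
  have htail (d : Fin (m + 1)) :
      volume.real (T1 d ⁻¹' Set.Ioi t) = p10 * (1 - p01) ^ (t - 1) := by
    rw [measureReal_def, measure_preimage_Ioi_of_shifted_geometric (hmeas1 d) hp10_pos.le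
      hp01_pos hp01_lt.le (hdist2 d) (by omega), ENNReal.toReal_ofReal (by positivity)]
  have hsub : (⋃ d, T1 d ⁻¹' Set.Ioi t) ⊆ {ω | t < ∑ d, T1 d ω} :=
    Set.iUnion_subset fun d _ hω =>
      hω.trans_le (single_le_sum (fun _ _ => Nat.zero_le _) (mem_univ d))
  calc ENNReal.ofReal ((1 - p01) ^ t)
      ≤ ENNReal.ofReal (1 - ∏ d, (1 - volume.real (T1 d ⁻¹' Set.Ioi t))) := by
        refine ENNReal.ofReal_le_ofReal ?_
        simp only [htail, prod_const, card_univ, Fintype.card_fin]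
        exact pow_le_one_sub_one_sub_mul_pow hp10_pos.le hp10_lt.le hr0 (by linarith)
          (by omega) (by linarith)
    _ = volume (⋃ d, T1 d ⁻¹' Set.Ioi t) := by
        rw [← hindep.measureReal_iUnion_preimage hmeas1 fun _ => measurableSet_Ioi,
          ofReal_measureReal]
    _ ≤ volume {ω | t < ∑ d, T1 d ω} := measure_mono hsub

theorem stmt_11 {Ω : Type*} [MeasureSpace Ω] [IsProbabilityMeasure (volume : Measure Ω)]
    (p10 p01 : ℝ) (hp10 : p10 ∈ Set.Ioo (0:ℝ) 1) (hp01 : p01 ∈ Set.Ioo (0:ℝ) 1)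
    (m : ℕ) (T1 : Fin (m + 1) → Ω → ℕ)
    (hmeas1 : ∀ d, Measurable (T1 d))
    (hindep : iIndepFun T1 volume)
    (hdist1 : ∀ d, volume {ω | T1 d ω = 1} = ENNReal.ofReal (1 - p10))
    (hdist2 : ∀ d, ∀ t : ℕ, 2 ≤ t →
      volume {ω | T1 d ω = t} = ENNReal.ofReal (p10 * (1 - p01) ^ (t - 2) * p01))
    (hsum : (∑ d ∈ Finset.range (m + 1), p10 * (1 - p10) ^ d) + p01 ≥ 1) :
    ∀ t : ℕ, m + 1 < t →
      volume {ω | t < ∑ d, T1 d ω} ≥ ENNReal.ofReal ((1 - p01) ^ t) :=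
  stmt_11_general p10 p01 hp10 hp01 m T1 hmeas1 hindep hdist2 hsum
end

section
/- Suppose K = K(n) satisfies K(n)/log n → ∞ as n → ∞ (K ∈ ω(log n)). For the memoryless erasure channel with success probability γ ∈ (0,1), with T(n,K) the max over n i.i.d. negative-binomial(K, γ) variables, the normalized expected completion time satisfies E[T(n,K)]/K → 1/γ, and hence the throughput η(n,K) = K/E[T(n,K)] → γ. -/
/-!
Write `T = max_{i<n} T_i` with `T_i = ∑_{j<K} G(i, j)`. The lower bound `E T ≥ E T_0 = K / γ` is
immediate. For the upper bound, Jensen's inequality and a union bound give, for every `θ > 0`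
at which the moment generating function of `G` is finite,
`θ E T ≤ log E e^{θ T} ≤ log n + K Λ(θ)`, where `Λ` is the cumulant generating function of a
single `G(i, j)`. Dividing by `θ K` and letting `n → ∞` (so that `log n / K → 0`) and then
`θ → 0⁺` yields `limsup E T / K ≤ Λ'(0) = E G = 1 / γ`.
-/

open MeasureTheory ProbabilityTheory Filter Real Topology Finset

lemma MeasureTheory.Measure.ext_of_forall_ne_singleton {α : Type*} [MeasurableSpace α]
    [Countable α] [MeasurableSingletonClass α] {ν₁ ν₂ : Measure α}
    [IsProbabilityMeasure ν₁] [IsProbabilityMeasure ν₂] (a : α)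
    (h : ∀ b ≠ a, ν₁ {b} = ν₂ {b}) : ν₁ = ν₂ := by
  have hrestrict : ν₁.restrict {a}ᶜ = ν₂.restrict {a}ᶜ := by
    refine Measure.ext_of_singleton fun b => ?_
    rw [Measure.restrict_apply (measurableSet_singleton b),
      Measure.restrict_apply (measurableSet_singleton b)]
    by_cases hb : b = a
    · simp [hb]
    · rw [Set.inter_eq_left.mpr (Set.singleton_subset_iff.mpr hb), h b hb]
  have hcompl : ν₁ {a}ᶜ = ν₂ {a}ᶜ := by
    simpa using congrArg (· Set.univ) hrestrict
  refine Measure.ext_of_singleton fun b => ?_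
  by_cases hb : b = a
  · subst hb
    rw [prob_compl_eq_one_sub (measurableSet_singleton b),
      prob_compl_eq_one_sub (measurableSet_singleton b)] at hcompl
    exact (ENNReal.sub_right_inj ENNReal.one_ne_top prob_le_one prob_le_one).mp hcompl
  · exact h b hb

lemma identDistrib_succ_geometricMeasure {Ω : Type*} [MeasurableSpace Ω] {μ : Measure Ω}
    [IsProbabilityMeasure μ] {X : Ω → ℕ} (hX : Measurable X) {p : unitInterval} (hp : p ≠ 0)
    (hlaw : ∀ t : ℕ, 1 ≤ t → μ {ω | X ω = t} = ENNReal.ofReal (p * (1 - p) ^ (t - 1))) :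
    IdentDistrib X (· + 1) μ (geometricMeasure p) where
  aemeasurable_fst := hX.aemeasurable
  aemeasurable_snd := (measurable_add_const 1).aemeasurable
  map_eq := by
    have := Measure.isProbabilityMeasure_map (μ := μ) hX.aemeasurable
    have := Measure.isProbabilityMeasure_map (μ := geometricMeasure p)
      (measurable_add_const 1).aemeasurable
    -- `hlaw` says nothing about `0`: its mass is forced by the total mass being one.
    refine Measure.ext_of_forall_ne_singleton 0 fun t ht => ?_
    obtain ⟨s, rfl⟩ := Nat.exists_eq_add_one.mpr (Nat.pos_of_ne_zero ht)
    rw [Measure.map_apply hX (measurableSet_singleton _),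
      Measure.map_apply (measurable_add_const 1) (measurableSet_singleton _)]
    have hpre : (· + 1) ⁻¹' ({s + 1} : Set ℕ) = {s} := by ext; simp
    rw [hpre, geometricMeasure_singleton hp, mul_comm]
    exact hlaw (s + 1) (by omega)

lemma integral_succ_geometricMeasure {p : unitInterval} (hp : p ≠ 0) :
    ∫ n, ((n + 1 : ℕ) : ℝ) ∂geometricMeasure p = (p : ℝ)⁻¹ := by
  have hp0 : (0 : ℝ) < p := lt_of_le_of_ne p.2.1 (unitInterval.coe_ne_zero.mpr hp).symm
  have hq0 : (0 : ℝ) ≤ 1 - p := by linarith [p.2.2]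
  have hq1 : (1 : ℝ) - p < 1 := by linarith
  have hsum := ((hasSum_coe_mul_geometric_of_norm_lt_one (𝕜 := ℝ) (r := 1 - p)
    (by rwa [Real.norm_of_nonneg hq0])).add (hasSum_geometric_of_lt_one hq0 hq1)).mul_right (p : ℝ)
  calc ∫ n, ((n + 1 : ℕ) : ℝ) ∂geometricMeasure p
      = ∑' n : ℕ, ((n : ℝ) * (1 - p) ^ n + (1 - p) ^ n) * p := by
        rw [integral_geometricMeasure hp]
        exact tsum_congr fun n => by push_cast; ring
    _ = (p : ℝ)⁻¹ := by
        rw [hsum.tsum_eq, sub_sub_cancel]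
        field_simp
        ring

lemma zero_mem_interior_integrableExpSet_succ_geometricMeasure {p : unitInterval} (hp : p ≠ 0) :
    0 ∈ interior (integrableExpSet (fun n : ℕ => ((n + 1 : ℕ) : ℝ)) (geometricMeasure p)) := by
  have hp0 : (0 : ℝ) < p := lt_of_le_of_ne p.2.1 (unitInterval.coe_ne_zero.mpr hp).symm
  have hq0 : (0 : ℝ) ≤ 1 - p := by linarith [p.2.2]
  have hopen : IsOpen {t : ℝ | (1 - p) * exp t < 1} := isOpen_lt (by fun_prop) continuous_const
  refine interior_maximal (fun t (ht : (1 - p) * exp t < 1) => ?_) hopen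
    (show (1 - p) * exp 0 < (1 : ℝ) by rw [exp_zero]; linarith)
  change Integrable _ _
  rw [integrable_geometricMeasure_iff hp]
  refine ((summable_geometric_of_lt_one (by positivity) ht).mul_left (p * exp t)).congr fun n => ?_
  rw [Real.norm_of_nonneg (exp_pos _).le]
  push_cast
  rw [mul_add, mul_one, exp_add, mul_comm t, exp_nat_mul, mul_pow]
  ring

section FinsetSup

variable {Ω ι : Type*} [MeasurableSpace Ω] {μ : Measure Ω} {S : ι → Ω → ℕ} {s : Finset ι}

lemma integrable_natCast_finset_sup [IsFiniteMeasure μ]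
    (hint : ∀ i ∈ s, Integrable (fun ω => (S i ω : ℝ)) μ) :
    Integrable (fun ω => ((s.sup fun i => S i ω : ℕ) : ℝ)) μ := by
  classical
  induction s using Finset.induction_on with
  | empty => simp
  | insert i s _ ih =>
    simp_rw [Finset.sup_insert, Nat.cast_max]
    exact (hint i (mem_insert_self i s)).sup (ih fun j hj => hint j (mem_insert_of_mem hj))

lemma exp_mul_natCast_finset_sup_le_sum (hs : s.Nonempty) (θ : ℝ) (f : ι → ℕ) :
    exp (θ * (s.sup f : ℕ)) ≤ ∑ i ∈ s, exp (θ * f i) := by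
  obtain ⟨i, hi, hsup⟩ := s.exists_mem_eq_sup hs f
  rw [hsup]
  exact single_le_sum (f := fun i => exp (θ * f i)) (fun _ _ => (exp_pos _).le) hi

-- Jensen's inequality for `exp (θ ·)`, then a union bound.
lemma mul_integral_natCast_finset_sup_le_log_sum_mgf [IsProbabilityMeasure μ] (hs : s.Nonempty)
    {θ : ℝ} (hint : ∀ i ∈ s, Integrable (fun ω => (S i ω : ℝ)) μ)
    (hexp : ∀ i ∈ s, Integrable (fun ω => exp (θ * S i ω)) μ) :
    θ * ∫ ω, ((s.sup fun i => S i ω : ℕ) : ℝ) ∂μ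
      ≤ log (∑ i ∈ s, mgf (fun ω => (S i ω : ℝ)) μ θ) := by
  have hM := integrable_natCast_finset_sup hint
  have hbound : ∀ ω, exp (θ * ((s.sup fun i => S i ω : ℕ) : ℝ)) ≤ ∑ i ∈ s, exp (θ * S i ω) :=
    fun ω => exp_mul_natCast_finset_sup_le_sum hs θ _
  have hsum : Integrable (fun ω => ∑ i ∈ s, exp (θ * S i ω)) μ := integrable_finsetSum s hexp
  have hexpM : Integrable (fun ω => exp (θ * ((s.sup fun i => S i ω : ℕ) : ℝ))) μ :=
    hsum.mono (continuous_exp.comp_aestronglyMeasurable (hM.aestronglyMeasurable.const_mul θ))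
      (ae_of_all _ fun ω => by
        rw [norm_of_nonneg (exp_pos _).le, norm_of_nonneg (sum_nonneg fun _ _ => (exp_pos _).le)]
        exact hbound ω)
  have hjensen := convexOn_exp.map_integral_le continuous_exp.continuousOn isClosed_univ
    (ae_of_all _ fun _ => Set.mem_univ _) (hM.const_mul θ) hexpM
  rw [integral_const_mul] at hjensen
  calc θ * ∫ ω, ((s.sup fun i => S i ω : ℕ) : ℝ) ∂μ
      ≤ log (∫ ω, exp (θ * ((s.sup fun i => S i ω : ℕ) : ℝ)) ∂μ) :=
        (le_log_iff_exp_le (integral_exp_pos hexpM)).mpr hjensen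
    _ ≤ log (∑ i ∈ s, mgf (fun ω => (S i ω : ℝ)) μ θ) := by
        simp only [mgf]
        rw [← integral_finsetSum s hexp]
        exact log_le_log (integral_exp_pos hexpM) (integral_mono hexpM hsum hbound)

end FinsetSup

lemma tendsto_of_eventually_le_of_mul_le_add {u r : ℕ → ℝ} {f : ℝ → ℝ} {a : ℝ}
    (hr : Tendsto r atTop (𝓝 0)) (hf : HasDerivAt f a 0) (hf0 : f 0 = 0)
    (hlow : ∀ᶠ n in atTop, a ≤ u n)
    (hup : ∀ᶠ θ in 𝓝[>] 0, ∀ᶠ n in atTop, θ * u n ≤ r n + f θ) :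
    Tendsto u atTop (𝓝 a) := by
  refine tendsto_order.mpr ⟨fun b hb => hlow.mono fun n hn => hb.trans_le hn, fun b hb => ?_⟩
  have hslope : Tendsto (fun θ => θ⁻¹ * f θ) (𝓝[>] 0) (𝓝 a) := by
    simpa [hf0] using hf.tendsto_slope_zero_right
  obtain ⟨θ, hθ, hθpos, hθslope⟩ := (hup.and ((eventually_mem_nhdsWithin (a := (0 : ℝ))).and
    (hslope.eventually (gt_mem_nhds (show a < (a + b) / 2 by linarith))))).exists
  have hθpos : (0 : ℝ) < θ := hθpos
  rw [inv_mul_lt_iff₀ hθpos] at hθslope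
  filter_upwards [hθ, hr.eventually (gt_mem_nhds (mul_pos hθpos (half_pos (sub_pos.mpr hb))))]
    with n hn hrn
  nlinarith

section CompletionTime

variable {Ω Ω' : Type*} [MeasurableSpace Ω] [MeasurableSpace Ω'] {μ : Measure Ω}
  {μ' : Measure Ω'} {G : ℕ × ℕ → Ω → ℕ} {Y : Ω' → ℝ}

lemma ProbabilityTheory.iIndepFun.natCast_row (hindep : iIndepFun G μ) (i : ℕ) :
    iIndepFun (fun j ω => (G (i, j) ω : ℝ)) μ :=
  (hindep.precomp (Prod.mk_right_injective i)).comp _ fun _ => measurable_from_top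

lemma integrable_sum_row (hident : ∀ p, IdentDistrib (fun ω => (G p ω : ℝ)) Y μ μ')
    (hY : Integrable Y μ') (i k : ℕ) :
    Integrable (fun ω => ((∑ j ∈ range k, G (i, j) ω : ℕ) : ℝ)) μ := by
  simp_rw [Nat.cast_sum]
  exact integrable_finsetSum _ fun j _ => (hident (i, j)).integrable_iff.mpr hY

lemma integral_sum_row (hident : ∀ p, IdentDistrib (fun ω => (G p ω : ℝ)) Y μ μ')
    (hY : Integrable Y μ') (i k : ℕ) :
    ∫ ω, ((∑ j ∈ range k, G (i, j) ω : ℕ) : ℝ) ∂μ = k * μ'[Y] := by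
  simp_rw [Nat.cast_sum]
  rw [integral_finsetSum _ fun j _ => (hident (i, j)).integrable_iff.mpr hY]
  simp [fun j => (hident (i, j)).integral_eq]

lemma mgf_sum_row (hmeas : ∀ p, Measurable (G p)) (hindep : iIndepFun G μ)
    (hident : ∀ p, IdentDistrib (fun ω => (G p ω : ℝ)) Y μ μ') (i k : ℕ) (θ : ℝ) :
    mgf (fun ω => ((∑ j ∈ range k, G (i, j) ω : ℕ) : ℝ)) μ θ = mgf Y μ' θ ^ k := by
  have hsum : (fun ω => ((∑ j ∈ range k, G (i, j) ω : ℕ) : ℝ))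
      = ∑ j ∈ range k, fun ω => (G (i, j) ω : ℝ) := by
    ext ω
    simp
  rw [hsum, (hindep.natCast_row i).mgf_sum fun j => measurable_from_top.comp (hmeas (i, j))]
  simp [fun j => mgf_congr_of_identDistrib _ _ (hident (i, j)) θ]

lemma integrable_exp_mul_sum_row [IsFiniteMeasure μ] (hmeas : ∀ p, Measurable (G p))
    (hindep : iIndepFun G μ) (hident : ∀ p, IdentDistrib (fun ω => (G p ω : ℝ)) Y μ μ') {θ : ℝ}
    (hθ : θ ∈ integrableExpSet Y μ') (i k : ℕ) :
    Integrable (fun ω => exp (θ * ((∑ j ∈ range k, G (i, j) ω : ℕ) : ℝ))) μ := by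
  simpa using (hindep.natCast_row i).integrable_exp_mul_sum
    (fun j => measurable_from_top.comp (hmeas (i, j)))
    fun j _ => ((hident (i, j)).comp (measurable_const_mul θ).exp).integrable_iff.mpr hθ

def completionTime (G : ℕ × ℕ → Ω → ℕ) (n k : ℕ) (ω : Ω) : ℕ :=
  (range n).sup fun i => ∑ j ∈ range k, G (i, j) ω

lemma mul_integral_le_integral_completionTime [IsFiniteMeasure μ]
    (hident : ∀ p, IdentDistrib (fun ω => (G p ω : ℝ)) Y μ μ') (hY : Integrable Y μ')
    {n : ℕ} (hn : 1 ≤ n) (k : ℕ) :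
    k * μ'[Y] ≤ ∫ ω, (completionTime G n k ω : ℝ) ∂μ := by
  have hrow := integrable_sum_row hident hY (k := k)
  rw [← integral_sum_row hident hY 0 k]
  exact integral_mono (hrow 0) (integrable_natCast_finset_sup fun i _ => hrow i)
    fun ω => Nat.cast_le.mpr
      (le_sup (f := fun i => ∑ j ∈ range k, G (i, j) ω) (mem_range.mpr hn))

lemma mul_integral_completionTime_le [IsProbabilityMeasure μ] [IsProbabilityMeasure μ']
    (hmeas : ∀ p, Measurable (G p)) (hindep : iIndepFun G μ)
    (hident : ∀ p, IdentDistrib (fun ω => (G p ω : ℝ)) Y μ μ') (hY : Integrable Y μ')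
    {θ : ℝ} (hθ : θ ∈ integrableExpSet Y μ') {n : ℕ} (hn : 1 ≤ n) (k : ℕ) :
    θ * ∫ ω, (completionTime G n k ω : ℝ) ∂μ ≤ log n + k * cgf Y μ' θ := by
  have hrow := integrable_sum_row hident hY (k := k)
  have h := mul_integral_natCast_finset_sup_le_log_sum_mgf (s := range n)
    (nonempty_range_iff.mpr (by omega)) (fun i _ => hrow i)
    fun i _ => integrable_exp_mul_sum_row hmeas hindep hident hθ i k
  simp only [mgf_sum_row hmeas hindep hident, sum_const, card_range, nsmul_eq_mul] at h
  rwa [log_mul (Nat.cast_pos.mpr hn).ne' (pow_pos (mgf_pos hθ) k).ne', log_pow] at h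

theorem tendsto_integral_completionTime_div [IsProbabilityMeasure μ] [IsProbabilityMeasure μ']
    (hmeas : ∀ p, Measurable (G p)) (hindep : iIndepFun G μ)
    (hident : ∀ p, IdentDistrib (fun ω => (G p ω : ℝ)) Y μ μ')
    (hY : 0 ∈ interior (integrableExpSet Y μ')) {K : ℕ → ℕ}
    (hK : Tendsto (fun n : ℕ => (K n : ℝ) / log n) atTop atTop) :
    Tendsto (fun n => (∫ ω, (completionTime G n (K n) ω : ℝ) ∂μ) / K n) atTop (𝓝 μ'[Y]) := by
  have hYint := integrable_of_mem_interior_integrableExpSet hY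
  have hKpos : ∀ᶠ n in atTop, (0 : ℝ) < K n := (hK.eventually_ge_atTop 1).mono fun n hn =>
    Nat.cast_pos.mpr (Nat.pos_of_ne_zero fun h => by norm_num [h] at hn)
  have hr : Tendsto (fun n : ℕ => log n / (K n : ℝ)) atTop (𝓝 0) := by
    convert hK.inv_tendsto_atTop using 2 with n
    simp
  have hderiv : HasDerivAt (cgf Y μ') μ'[Y] 0 := by
    simpa [deriv_cgf_zero hY] using (analyticAt_cgf hY).differentiableAt.hasDerivAt
  refine tendsto_of_eventually_le_of_mul_le_add hr hderiv cgf_zero ?_ ?_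
  · filter_upwards [hKpos, eventually_ge_atTop 1] with n hKn hn
    rw [le_div_iff₀ hKn, mul_comm]
    exact mul_integral_le_integral_completionTime hident hYint hn (K n)
  · filter_upwards [mem_nhdsWithin_of_mem_nhds (isOpen_interior.mem_nhds hY)] with θ hθ
    filter_upwards [hKpos, eventually_ge_atTop 1] with n hKn hn
    have h := mul_integral_completionTime_le hmeas hindep hident hYint (interior_subset hθ) hn (K n)
    rw [← mul_div_assoc, div_add' _ _ _ hKn.ne', mul_comm (cgf Y μ' θ)]
    exact div_le_div_of_nonneg_right h hKn.le

end CompletionTime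

theorem stmt_17_general {Ω : Type*} [MeasureSpace Ω] [IsProbabilityMeasure (volume : Measure Ω)]
    (γ : ℝ) (hγ : γ ∈ Set.Ioo (0:ℝ) 1) (K : ℕ → ℕ)
    (hK : Tendsto (fun n : ℕ => (K n : ℝ) / Real.log n) atTop atTop)
    (G : ℕ × ℕ → Ω → ℕ)
    (hmeas : ∀ p, Measurable (G p))
    (hindep : iIndepFun G volume)
    (hgeom : ∀ p, ∀ t : ℕ, 1 ≤ t →
      volume {ω | G p ω = t} = ENNReal.ofReal (γ * (1 - γ) ^ (t - 1))) :
    Tendsto (fun n : ℕ =>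
        (∫ ω, ((((Finset.range n).sup fun i => ∑ j ∈ Finset.range (K n), G (i, j) ω : ℕ)) : ℝ))
          / (K n : ℝ)) atTop (nhds (1 / γ)) ∧
    Tendsto (fun n : ℕ => (K n : ℝ) /
        ∫ ω, ((((Finset.range n).sup fun i => ∑ j ∈ Finset.range (K n), G (i, j) ω : ℕ)) : ℝ))
      atTop (nhds γ) := by
  let p : unitInterval := ⟨γ, hγ.1.le, hγ.2.le⟩
  have hp : p ≠ 0 := fun h => hγ.1.ne' (congrArg Subtype.val h)
  have hident : ∀ q, IdentDistrib (fun ω => (G q ω : ℝ)) (fun n : ℕ => ((n + 1 : ℕ) : ℝ))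
      volume (geometricMeasure p) := fun q =>
    (identDistrib_succ_geometricMeasure (hmeas q) hp (hgeom q)).comp measurable_from_top
  have hmean := tendsto_integral_completionTime_div hmeas hindep hident
    (zero_mem_interior_integrableExpSet_succ_geometricMeasure hp) hK
  rw [integral_succ_geometricMeasure hp, ← one_div] at hmean
  have hthroughput := hmean.inv₀ (one_div_ne_zero hγ.1.ne')
  simp only [one_div, inv_inv, inv_div] at hthroughput
  exact ⟨hmean, hthroughput⟩

theorem stmt_17 {Ω : Type*} [MeasureSpace Ω] [IsProbabilityMeasure (volume : Measure Ω)]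
    (γ : ℝ) (hγ : γ ∈ Set.Ioo (0:ℝ) 1) (K : ℕ → ℕ)
    (hK : Tendsto (fun n : ℕ => (K n : ℝ) / Real.log n) atTop atTop)
    (G : ℕ × ℕ → Ω → ℕ)
    (hmeas : ∀ p, Measurable (G p))
    (hindep : iIndepFun G volume)
    (hgeom : ∀ p, ∀ t : ℕ, 1 ≤ t →
      volume {ω | G p ω = t} = ENNReal.ofReal (γ * (1 - γ) ^ (t - 1)))
    (hint : ∀ p, Integrable (fun ω => (G p ω : ℝ)) volume) :
    Tendsto (fun n : ℕ =>
        (∫ ω, ((((Finset.range n).sup fun i => ∑ j ∈ Finset.range (K n), G (i, j) ω : ℕ)) : ℝ))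
          / (K n : ℝ)) atTop (nhds (1 / γ)) ∧
    Tendsto (fun n : ℕ => (K n : ℝ) /
        ∫ ω, ((((Finset.range n).sup fun i => ∑ j ∈ Finset.range (K n), G (i, j) ω : ℕ)) : ℝ))
      atTop (nhds γ) :=
  stmt_17_general γ hγ K hK G hmeas hindep hgeom
end

section
/- Suppose K = K(n) satisfies K(n)/log n → 0 as n → ∞ (K ∈ o(log n)), K(n) ≥ 1. For the memoryless erasure channel with success probability γ ∈ (0,1), the throughput vanishes: η(n,K) = K/E[T(n,K)] → 0 as n → ∞, where T(n,K) is the maximum over n i.i.d. negative-binomial(K,γ) completion times. -/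
/-!
Already the first packet of each of the `n` receivers needs a geometric time, and the largest of
`n` independent geometric variables grows like `log n / (-log (1 - γ))`: with
`m = ⌊log n / (-log (1 - γ))⌋`, each one exceeds `m` with probability `(1 - γ) ^ m ≥ 1 / n`, so
some one does with probability at least `1 - (1 - 1 / n) ^ n ≥ 1 / 2`. Markov's inequality then
gives `E[T(n, K)] ≥ log n / (-2 log (1 - γ))`, which outgrows `K = o(log n)`.
-/

open MeasureTheory ProbabilityTheory Filter Finset

lemma one_sub_pow_le_half {x : ℝ} {n : ℕ} (hx : x ≤ 1) (hnx : 1 ≤ n * x) :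
    (1 - x) ^ n ≤ 1 / 2 :=
  calc (1 - x) ^ n ≤ Real.exp (-x) ^ n :=
        pow_le_pow_left₀ (by linarith) (Real.one_sub_le_exp_neg x) n
    _ = Real.exp (-(n * x)) := by rw [← Real.exp_nat_mul]; ring_nf
    _ ≤ Real.exp (-1) := Real.exp_le_exp.2 (by linarith)
    _ ≤ 1 / 2 := Real.exp_neg_one_lt_half.le

lemma one_le_mul_pow_floor_log_div {r x : ℝ} (hr0 : 0 < r) (hr1 : r < 1) (hx : 1 ≤ x) :
    1 ≤ x * r ^ ⌊Real.log x / -Real.log r⌋₊ := by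
  have hc : 0 < -Real.log r := neg_pos.2 (Real.log_neg hr0 hr1)
  set m := ⌊Real.log x / -Real.log r⌋₊
  have hm : (m : ℝ) * -Real.log r ≤ Real.log x :=
    (le_div_iff₀ hc).1 (Nat.floor_le (div_nonneg (Real.log_nonneg hx) hc.le))
  rw [← Real.exp_log (by linarith : 0 < x), ← Real.exp_log (pow_pos hr0 _), ← Real.exp_add,
    Real.log_pow, Real.one_le_exp_iff]
  linarith

section Geometric

variable {Ω : Type*} [MeasurableSpace Ω] {μ : Measure Ω} {γ : ℝ}

/-- `X` counts the trials up to and including the first success, each succeeding with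
probability `γ`. -/
def HasGeometricLaw (X : Ω → ℕ) (γ : ℝ) (μ : Measure Ω) : Prop :=
  ∀ t, 1 ≤ t → μ {ω | X ω = t} = ENNReal.ofReal (γ * (1 - γ) ^ (t - 1))

lemma measure_lt_of_geometric {X : Ω → ℕ} (hX : Measurable X) (hγ0 : 0 < γ) (hγ1 : γ ≤ 1)
    (hlaw : HasGeometricLaw X γ μ) (m : ℕ) :
    μ {ω | m < X ω} = ENNReal.ofReal ((1 - γ) ^ m) := by
  have hr0 : 0 ≤ 1 - γ := by linarith
  have hr1 : 1 - γ < 1 := by linarith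
  have hunion : {ω | m < X ω} = ⋃ k : ℕ, {ω | X ω = m + 1 + k} := by
    ext ω
    simp only [Set.mem_ofPred_eq, Set.mem_iUnion]
    exact ⟨fun h => ⟨X ω - (m + 1), by omega⟩, fun ⟨k, hk⟩ => by omega⟩
  have hterm : ∀ k : ℕ, μ {ω | X ω = m + 1 + k}
      = ENNReal.ofReal (γ * (1 - γ) ^ m * (1 - γ) ^ k) := fun k => by
    rw [hlaw _ (by omega), show m + 1 + k - 1 = m + k by omega, pow_add, mul_assoc]
  have hdisj : Pairwise (Function.onFun Disjoint fun k : ℕ => {ω | X ω = m + 1 + k}) :=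
    fun k l hkl => Set.disjoint_left.2 fun ω hk hl => hkl (by simp_all)
  rw [hunion, measure_iUnion hdisj fun k => measurableSet_eq_fun hX measurable_const,
    funext hterm, ← ENNReal.ofReal_tsum_of_nonneg (fun k => by positivity)
      ((summable_geometric_of_lt_one hr0 hr1).mul_left _),
    tsum_mul_left, tsum_geometric_of_lt_one hr0 hr1, sub_sub_cancel, mul_right_comm,
    mul_inv_cancel₀ hγ0.ne', one_mul]

lemma measureReal_le_of_geometric [IsProbabilityMeasure μ] {X : Ω → ℕ} (hX : Measurable X)
    (hγ0 : 0 < γ) (hγ1 : γ ≤ 1) (hlaw : HasGeometricLaw X γ μ) (m : ℕ) :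
    μ.real {ω | X ω ≤ m} = 1 - (1 - γ) ^ m := by
  have hcompl : {ω | X ω ≤ m} = {ω | m < X ω}ᶜ := by ext; simp
  rw [hcompl, measureReal_compl (measurableSet_lt measurable_const hX), probReal_univ,
    measureReal_def, measure_lt_of_geometric hX hγ0 hγ1 hlaw,
    ENNReal.toReal_ofReal (pow_nonneg (by linarith) m)]

variable {ι : Type*} {X : ι → Ω → ℕ}

lemma measureReal_forall_le_of_iIndepFun [IsProbabilityMeasure μ] (hind : iIndepFun X μ)
    (hX : ∀ i, Measurable (X i)) (hγ0 : 0 < γ) (hγ1 : γ ≤ 1)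
    (hlaw : ∀ i, HasGeometricLaw (X i) γ μ) (s : Finset ι) (m : ℕ) :
    μ.real (⋂ i ∈ s, {ω | X i ω ≤ m}) = (1 - (1 - γ) ^ m) ^ #s := by
  rw [measureReal_def, hind.meas_biInter (s := fun i => {ω | X i ω ≤ m})
      fun i _ => ⟨Set.Iic m, measurableSet_Iic, rfl⟩, ENNReal.toReal_prod]
  simp_rw [← measureReal_def, measureReal_le_of_geometric (hX _) hγ0 hγ1 (hlaw _)]
  rw [prod_const]

/-- Markov's inequality at level `m + 1`, bounding the event `m + 1 ≤ Y` below by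
`∃ i ∈ s, m < X i`. -/
lemma mul_one_sub_pow_le_integral [IsProbabilityMeasure μ] (hind : iIndepFun X μ)
    (hX : ∀ i, Measurable (X i)) (hγ0 : 0 < γ) (hγ1 : γ ≤ 1)
    (hlaw : ∀ i, HasGeometricLaw (X i) γ μ)
    {s : Finset ι} {Y : Ω → ℕ} (hXY : ∀ i ∈ s, ∀ ω, X i ω ≤ Y ω)
    (hY : Integrable (fun ω => (Y ω : ℝ)) μ) (m : ℕ) :
    (m + 1) * (1 - (1 - (1 - γ) ^ m) ^ #s) ≤ ∫ ω, (Y ω : ℝ) ∂μ := by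
  have hsub : (⋂ i ∈ s, {ω | X i ω ≤ m})ᶜ ⊆ {ω | (m : ℝ) + 1 ≤ Y ω} := by
    intro ω hω
    obtain ⟨i, hi, hlt⟩ : ∃ i ∈ s, m < X i ω := by simpa using hω
    exact_mod_cast hlt.trans_le (hXY i hi ω)
  have hevent : 1 - (1 - (1 - γ) ^ m) ^ #s ≤ μ.real {ω | (m : ℝ) + 1 ≤ Y ω} := by
    rw [← measureReal_forall_le_of_iIndepFun hind hX hγ0 hγ1 hlaw s m]
    calc 1 - μ.real (⋂ i ∈ s, {ω | X i ω ≤ m}) = μ.real (⋂ i ∈ s, {ω | X i ω ≤ m})ᶜ := by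
          rw [measureReal_compl (Finset.measurableSet_biInter _ fun i _ =>
            measurableSet_le (hX i) measurable_const), probReal_univ]
      _ ≤ _ := measureReal_mono hsub
  have hmarkov := mul_meas_ge_le_integral_of_nonneg (ae_of_all μ fun ω => (Y ω).cast_nonneg) hY
    ((m : ℝ) + 1)
  exact (mul_le_mul_of_nonneg_left hevent (by positivity)).trans hmarkov

lemma log_card_div_le_integral [IsProbabilityMeasure μ] (hind : iIndepFun X μ)
    (hX : ∀ i, Measurable (X i)) (hγ0 : 0 < γ) (hγ1 : γ < 1)
    (hlaw : ∀ i, HasGeometricLaw (X i) γ μ)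
    {s : Finset ι} (hs : s.Nonempty) {Y : Ω → ℕ} (hXY : ∀ i ∈ s, ∀ ω, X i ω ≤ Y ω)
    (hY : Integrable (fun ω => (Y ω : ℝ)) μ) :
    Real.log #s / (2 * -Real.log (1 - γ)) ≤ ∫ ω, (Y ω : ℝ) ∂μ := by
  set c := -Real.log (1 - γ)
  set m := ⌊Real.log #s / c⌋₊
  have hcard : (1 : ℝ) ≤ #s := by exact_mod_cast hs.card_pos
  have hlog : Real.log #s / c ≤ m + 1 := (Nat.lt_floor_add_one _).le
  have hhalf : (1 - (1 - γ) ^ m) ^ #s ≤ 1 / 2 :=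
    one_sub_pow_le_half (pow_le_one₀ (by linarith) (by linarith))
      (one_le_mul_pow_floor_log_div (by linarith) (by linarith) hcard)
  calc Real.log #s / (2 * c) = Real.log #s / c * (1 / 2) := by ring
    _ ≤ (m + 1) * (1 - (1 - (1 - γ) ^ m) ^ #s) := by
        gcongr
        linarith
    _ ≤ ∫ ω, (Y ω : ℝ) ∂μ :=
        mul_one_sub_pow_le_integral hind hX hγ0 hγ1.le hlaw hXY hY m

end Geometric

theorem stmt_18_general {Ω : Type*} [MeasureSpace Ω] [IsProbabilityMeasure (volume : Measure Ω)]
    (γ : ℝ) (hγ : γ ∈ Set.Ioo (0:ℝ) 1) (K : ℕ → ℕ) (hK1 : ∀ n, 1 ≤ K n)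
    (hK : Tendsto (fun n : ℕ => (K n : ℝ) / Real.log n) atTop (nhds 0))
    (G : ℕ × ℕ → Ω → ℕ)
    (hmeas : ∀ p, Measurable (G p))
    (hindep : iIndepFun G volume)
    (hgeom : ∀ p, ∀ t : ℕ, 1 ≤ t →
      volume {ω | G p ω = t} = ENNReal.ofReal (γ * (1 - γ) ^ (t - 1))) :
    Tendsto (fun n : ℕ => (K n : ℝ) /
        ∫ ω, ((((Finset.range n).sup fun i => ∑ j ∈ Finset.range (K n), G (i, j) ω : ℕ)) : ℝ))
      atTop (nhds 0) := by
  obtain ⟨hγ0, hγ1⟩ := hγ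
  set c := -Real.log (1 - γ)
  have hc : 0 < c := neg_pos.2 (Real.log_neg (by linarith) (by linarith))
  have hfirst : ∀ n, ∀ i ∈ range n, ∀ ω, G (i, 0) ω
      ≤ (range n).sup fun i => ∑ j ∈ range (K n), G (i, j) ω := fun n i hi ω =>
    (single_le_sum (f := fun j => G (i, j) ω) (fun _ _ => Nat.zero_le _)
      (mem_range.2 (hK1 n))).trans (le_sup (f := fun i => ∑ j ∈ range (K n), G (i, j) ω) hi)
  refine squeeze_zero' (Eventually.of_forall fun n => div_nonneg (Nat.cast_nonneg _)
    (integral_nonneg fun ω => Nat.cast_nonneg _)) ?_ (by simpa using hK.const_mul (2 * c))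
  filter_upwards [eventually_ge_atTop 2] with n hn
  by_cases hint :
      Integrable fun ω => (((range n).sup fun i => ∑ j ∈ range (K n), G (i, j) ω : ℕ) : ℝ)
  · have hlog : 0 < Real.log n := Real.log_pos (by exact_mod_cast hn)
    have hbound := log_card_div_le_integral (hindep.precomp (Prod.mk_left_injective 0))
      (fun i => hmeas _) hγ0 hγ1 (fun i => hgeom _) (nonempty_range_iff.2 (by omega))
      (hfirst n) hint
    rw [card_range] at hbound
    calc _ ≤ (K n : ℝ) / (Real.log n / (2 * c)) :=
          div_le_div_of_nonneg_left (Nat.cast_nonneg _) (by positivity) hbound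
      _ = 2 * c * ((K n : ℝ) / Real.log n) := by field_simp
  · rw [integral_undef hint, div_zero]
    positivity

theorem stmt_18 {Ω : Type*} [MeasureSpace Ω] [IsProbabilityMeasure (volume : Measure Ω)]
    (γ : ℝ) (hγ : γ ∈ Set.Ioo (0:ℝ) 1) (K : ℕ → ℕ) (hK1 : ∀ n, 1 ≤ K n)
    (hK : Tendsto (fun n : ℕ => (K n : ℝ) / Real.log n) atTop (nhds 0))
    (G : ℕ × ℕ → Ω → ℕ)
    (hmeas : ∀ p, Measurable (G p))
    (hindep : iIndepFun G volume)
    (hgeom : ∀ p, ∀ t : ℕ, 1 ≤ t →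
      volume {ω | G p ω = t} = ENNReal.ofReal (γ * (1 - γ) ^ (t - 1)))
    (hint : ∀ p, Integrable (fun ω => (G p ω : ℝ)) volume) :
    Tendsto (fun n : ℕ => (K n : ℝ) /
        ∫ ω, ((((Finset.range n).sup fun i => ∑ j ∈ Finset.range (K n), G (i, j) ω : ℕ)) : ℝ))
      atTop (nhds 0) :=
  stmt_18_general γ hγ K hK1 hK G hmeas hindep hgeom
end
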